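/- arXiv:2507.17291 — 3 statements merged into one kernel-verified Lean document; each statement's English description precedes it below -/
import Mathlib

section
/- For every finite set K of composite choices there exists a pairwise incompatible set K' of composite choices equivalent to K, i.e., ω_K = ω_{K'}. -/
open Finset

def Consistent {F : Type*} (κ : Finset (F × Bool)) : Prop :=
  ∀ f : F, ¬((f, true) ∈ κ ∧ (f, false) ∈ κ)

def Compatible {F : Type*} (κ : Finset (F × Bool)) (w : Finset F) : Prop :=
  ∀ f : F, ((f, true) ∈ κ → f ∈ w) ∧ ((f, false) ∈ κ → f ∉ w)

noncomputable def rhoC {F : Type*} (p : F → ℝ) (κ : Finset (F × Bool)) : ℝ :=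
  ∏ a ∈ κ, (if a.2 then p a.1 else 1 - p a.1)

def omegaC {F : Type*} (κ : Finset (F × Bool)) : Set (Finset F) :=
  {w | Compatible κ w}

def omegaK {F : Type*} (K : Finset (Finset (F × Bool))) : Set (Finset F) :=
  {w | ∃ κ ∈ K, Compatible κ w}

theorem exists_pairwise_incompatible {F : Type*} [Fintype F] [DecidableEq F]
    (K : Finset (Finset (F × Bool))) (hK : ∀ κ ∈ K, Consistent κ) :
    ∃ K' : Finset (Finset (F × Bool)),
      (∀ κ ∈ K', Consistent κ) ∧
      (∀ κ₁ ∈ K', ∀ κ₂ ∈ K', κ₁ ≠ κ₂ → ¬ Consistent (κ₁ ∪ κ₂)) ∧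
      omegaK K = omegaK K' := by
  classical
  -- total choice associated to a world w
  set total : Finset F → Finset (F × Bool) :=
    fun w => (Finset.univ : Finset F).image (fun f => (f, decide (f ∈ w))) with htotal
  have hmem : ∀ (w : Finset F) (f : F) (b : Bool),
      (f, b) ∈ total w ↔ b = decide (f ∈ w) := by
    intro w f b
    simp only [htotal, Finset.mem_image, Finset.mem_univ, true_and, Prod.mk.injEq]
    constructor
    · rintro ⟨g, rfl, rfl⟩; rfl
    · rintro rfl; exact ⟨f, rfl, rfl⟩
  have hcompat : ∀ (w w' : Finset F), Compatible (total w) w' ↔ w' = w := by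
    intro w w'
    constructor
    · intro h
      ext f
      constructor
      · intro hf
        by_contra hfw
        exact (h f).2 ((hmem w f false).2 (by simp [hfw])) hf
      · intro hf
        exact (h f).1 ((hmem w f true).2 (by simp [hf]))
    · rintro rfl
      intro f
      constructor
      · intro hf; simpa using (hmem w' f true).1 hf
      · intro hf; simpa using (hmem w' f false).1 hf
  refine ⟨(Finset.univ.filter (fun w => ∃ κ ∈ K, Compatible κ w)).image total,
    ?_, ?_, ?_⟩
  · rintro κ hκ
    simp only [Finset.mem_image] at hκ
    obtain ⟨w, _, rfl⟩ := hκ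
    intro f ⟨h1, h2⟩
    have := (hmem w f true).1 h1
    have := (hmem w f false).1 h2
    simp_all
  · rintro κ₁ hκ₁ κ₂ hκ₂ hne
    simp only [Finset.mem_image] at hκ₁ hκ₂
    obtain ⟨w₁, _, rfl⟩ := hκ₁
    obtain ⟨w₂, _, rfl⟩ := hκ₂
    have hw : w₁ ≠ w₂ := by rintro rfl; exact hne rfl
    intro hcons
    obtain ⟨f, hf⟩ : ∃ f, (f ∈ w₁) ≠ (f ∈ w₂) := by
      by_contra h
      push_neg at h
      exact hw (Finset.ext fun f => by rw [h f])
    by_cases h1 : f ∈ w₁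
    · have h2 : f ∉ w₂ := fun h2 => hf (by simp [h1, h2])
      exact hcons f ⟨Finset.mem_union_left _ ((hmem w₁ f true).2 (by simp [h1])),
        Finset.mem_union_right _ ((hmem w₂ f false).2 (by simp [h2]))⟩
    · have h2 : f ∈ w₂ := by
        by_contra h2; exact hf (by simp [h1, h2])
      exact hcons f ⟨Finset.mem_union_right _ ((hmem w₂ f true).2 (by simp [h2])),
        Finset.mem_union_left _ ((hmem w₁ f false).2 (by simp [h1]))⟩
  · ext w
    simp only [omegaK, Set.mem_setOf_eq]
    constructor
    · intro hw
      refine ⟨total w, Finset.mem_image.2 ⟨w, Finset.mem_filter.2 ⟨Finset.mem_univ _, hw⟩, rfl⟩,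
        (hcompat w w).2 rfl⟩
    · rintro ⟨κ, hκ, hc⟩
      simp only [Finset.mem_image, Finset.mem_filter] at hκ
      obtain ⟨w', ⟨_, hw'⟩, rfl⟩ := hκ
      rw [(hcompat w' w).1 hc]
      exact hw'
end

section
/- Measure equivalence for composite choices: if K₁ and K₂ are pairwise incompatible sets of composite choices with ω_{K₁} = ω_{K₂}, then Σ_{κ∈K₁} ρ(κ) = Σ_{κ∈K₂} ρ(κ). -/
/-!
Give each world `w` the weight `∏ f, if f ∈ w then p f else 1 - p f`. For a consistent composite
choice `κ`, summing these weights over the worlds compatible with `κ` factorizes fact by fact: the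
facts `κ` constrains contribute `ρ(κ)`, the others `p f + (1 - p f) = 1`. If the members of `K` are
pairwise incompatible, their sets of compatible worlds are disjoint with union `ω_K`, so
`∑ κ ∈ K, ρ(κ)` is the total weight of `ω_K` and depends only on `ω_K`.
-/

open Finset

section

variable {F : Type*}

theorem Compatible.consistent {κ : Finset (F × Bool)} {w : Finset F} (h : Compatible κ w) :
    Consistent κ :=
  fun f ⟨ht, hf⟩ => (h f).2 hf ((h f).1 ht)

theorem Compatible.union [DecidableEq F] {κ₁ κ₂ : Finset (F × Bool)} {w : Finset F}
    (h₁ : Compatible κ₁ w) (h₂ : Compatible κ₂ w) : Compatible (κ₁ ∪ κ₂) w := by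
  intro f
  simp only [mem_union]
  exact ⟨fun h => h.elim (h₁ f).1 (h₂ f).1, fun h => h.elim (h₁ f).2 (h₂ f).2⟩

variable [Fintype F] [DecidableEq F]

theorem rhoC_eq_prod_univ (p : F → ℝ) (κ : Finset (F × Bool)) :
    rhoC p κ =
      ∏ f, (if (f, true) ∈ κ then p f else 1) * (if (f, false) ∈ κ then 1 - p f else 1) := by
  rw [rhoC, ← Fintype.prod_ite_mem, Fintype.prod_prod_type]
  simp only [Fintype.prod_bool, if_true, Bool.false_eq_true, if_false]

noncomputable def worldProb (p : F → ℝ) (w : Finset F) : ℝ :=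
  ∏ f, if f ∈ w then p f else 1 - p f

open scoped Classical in
theorem sum_worldProb_compatible (p : F → ℝ) {κ : Finset (F × Bool)} (hκ : Consistent κ) :
    ∑ w with Compatible κ w, worldProb p w = rhoC p κ := by
  -- `A f` and `B f` weigh `f ∈ w` and `f ∉ w`, and vanish on the choice `κ` rules out, so
  -- expanding `∏ f, (A f + B f)` over all worlds leaves exactly the compatible ones.
  set A : F → ℝ := fun f => if (f, false) ∈ κ then 0 else p f
  set B : F → ℝ := fun f => if (f, true) ∈ κ then 0 else 1 - p f
  have hpointwise : ∀ w : Finset F, ∀ f,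
      (if f ∈ w then A f else B f) =
        if ((f, true) ∈ κ → f ∈ w) ∧ ((f, false) ∈ κ → f ∉ w) then
          (if f ∈ w then p f else 1 - p f) else 0 := by
    intro w f
    simp only [A, B]
    split_ifs <;> tauto
  have hfactor : ∀ f, A f + B f =
      (if (f, true) ∈ κ then p f else 1) * (if (f, false) ∈ κ then 1 - p f else 1) := by
    intro f
    have := hκ f
    simp only [A, B]
    split_ifs <;> simp_all
  calc ∑ w with Compatible κ w, worldProb p w
      = ∑ w, if Compatible κ w then worldProb p w else 0 := sum_filter _ _
    _ = ∑ w, ∏ f, if f ∈ w then A f else B f := by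
        refine sum_congr rfl fun w _ => ?_
        rw [prod_congr rfl fun f _ => hpointwise w f, prod_ite_zero]
        simp only [Compatible, worldProb, mem_univ, true_imp_iff]
        congr
    _ = ∑ w : Finset F, (∏ f ∈ w, A f) * ∏ f ∈ wᶜ, B f := by
        refine sum_congr rfl fun w _ => ?_
        rw [prod_ite, ← compl_filter, filter_mem_eq_inter, univ_inter]
    _ = ∏ f, (A f + B f) := (Fintype.prod_add A B).symm
    _ = rhoC p κ := by simp only [hfactor, rhoC_eq_prod_univ]

open scoped Classical in
theorem sum_rhoC_eq_sum_worldProb (p : F → ℝ) {K : Finset (Finset (F × Bool))}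
    (hc : ∀ κ ∈ K, Consistent κ)
    (hpi : ∀ κ₁ ∈ K, ∀ κ₂ ∈ K, κ₁ ≠ κ₂ → ¬ Consistent (κ₁ ∪ κ₂)) :
    ∑ κ ∈ K, rhoC p κ = ∑ w with w ∈ omegaK K, worldProb p w := by
  have hdisj : (K : Set (Finset (F × Bool))).PairwiseDisjoint
      fun κ => ({w | Compatible κ w} : Finset (Finset F)) :=
    fun κ₁ h₁ κ₂ h₂ hne => disjoint_filter.2 fun _ _ hw₁ hw₂ =>
      hpi κ₁ h₁ κ₂ h₂ hne (hw₁.union hw₂).consistent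
  have hunion : ({w | w ∈ omegaK K} : Finset (Finset F)) =
      K.biUnion fun κ => {w | Compatible κ w} := by
    ext w
    simp only [mem_filter, mem_univ, true_and, mem_biUnion]
    rfl
  rw [hunion, sum_biUnion hdisj]
  exact sum_congr rfl fun κ hκ => (sum_worldProb_compatible p (hc κ hκ)).symm

end

theorem measure_equivalence_general {F : Type*} [Fintype F] [DecidableEq F]
    (p : F → ℝ)
    (K₁ K₂ : Finset (Finset (F × Bool)))
    (hc₁ : ∀ κ ∈ K₁, Consistent κ) (hc₂ : ∀ κ ∈ K₂, Consistent κ)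
    (hpi₁ : ∀ κ₁ ∈ K₁, ∀ κ₂ ∈ K₁, κ₁ ≠ κ₂ → ¬ Consistent (κ₁ ∪ κ₂))
    (hpi₂ : ∀ κ₁ ∈ K₂, ∀ κ₂ ∈ K₂, κ₁ ≠ κ₂ → ¬ Consistent (κ₁ ∪ κ₂))
    (heq : omegaK K₁ = omegaK K₂) :
    ∑ κ ∈ K₁, rhoC p κ = ∑ κ ∈ K₂, rhoC p κ := by
  classical
  rw [sum_rhoC_eq_sum_worldProb p hc₁ hpi₁, sum_rhoC_eq_sum_worldProb p hc₂ hpi₂, heq]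

theorem measure_equivalence {F : Type*} [Fintype F] [DecidableEq F]
    (p : F → ℝ) (hp : ∀ f, 0 ≤ p f ∧ p f ≤ 1)
    (K₁ K₂ : Finset (Finset (F × Bool)))
    (hc₁ : ∀ κ ∈ K₁, Consistent κ) (hc₂ : ∀ κ ∈ K₂, Consistent κ)
    (hpi₁ : ∀ κ₁ ∈ K₁, ∀ κ₂ ∈ K₁, κ₁ ≠ κ₂ → ¬ Consistent (κ₁ ∪ κ₂))
    (hpi₂ : ∀ κ₁ ∈ K₂, ∀ κ₂ ∈ K₂, κ₁ ≠ κ₂ → ¬ Consistent (κ₁ ∪ κ₂))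
    (heq : omegaK K₁ = omegaK K₂) :
    ∑ κ ∈ K₁, rhoC p κ = ∑ κ ∈ K₂, rhoC p κ :=
  measure_equivalence_general p K₁ K₂ hc₁ hc₂ hpi₁ hpi₂ heq
end

section
/- For a pairwise incompatible set K of composite choices, μ_c(K) = Σ_{κ∈K} ρ(κ) equals the world measure of the compatible worlds: μ_c(K) = Σ_{w ∈ ω_K} ρ_world(w). -/
open Finset

noncomputable def rhoWorld {F : Type*} [Fintype F] [DecidableEq F]
    (p : F → ℝ) (w : Finset F) : ℝ :=
  (∏ i ∈ w, p i) * ∏ i ∈ wᶜ, (1 - p i)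

set_option linter.unusedSectionVars false
set_option linter.unusedVariables false

section Aux
open scoped Classical

variable {F : Type*} [Fintype F] [DecidableEq F]

lemma sum_compat (p : F → ℝ) (T Fs : Finset F) (hd : Disjoint T Fs) :
    ∑ w ∈ (univ : Finset (Finset F)).filter (fun w => T ⊆ w ∧ Disjoint w Fs),
      rhoWorld p w = (∏ i ∈ T, p i) * ∏ i ∈ Fs, (1 - p i) := by
  set U : Finset F := (T ∪ Fs)ᶜ with hU
  have hsum : ∀ s ∈ U.powerset, rhoWorld p (T ∪ s) =
      ((∏ i ∈ T, p i) * ∏ i ∈ Fs, (1 - p i)) *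
        ((∏ i ∈ s, p i) * ∏ i ∈ U \ s, (1 - p i)) := by
    intro s hs
    rw [Finset.mem_powerset] at hs
    have hTs : Disjoint T s := by
      refine Finset.disjoint_left.2 fun i hiT his => ?_
      have := hs his
      simp [hU, Finset.mem_compl] at this
      exact this.1 hiT
    have hcompl : (T ∪ s)ᶜ = Fs ∪ (U \ s) := by
      ext i
      have h1 : i ∈ Fs → i ∉ T := fun h => Finset.disjoint_right.1 hd h
      have h2 : i ∈ s → i ∉ T ∧ i ∉ Fs := by
        intro h; have := hs h; simpa [hU, Finset.mem_compl] using this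
      simp only [Finset.mem_compl, Finset.mem_union, Finset.mem_sdiff, hU]
      tauto
    have hFsU : Disjoint Fs (U \ s) := by
      refine Finset.disjoint_left.2 fun i hiF hiU => ?_
      have := (Finset.mem_sdiff.1 hiU).1
      simp [hU, Finset.mem_compl] at this
      exact this.2 hiF
    rw [rhoWorld, Finset.prod_union hTs, hcompl, Finset.prod_union hFsU]
    ring
  have himg : (univ : Finset (Finset F)).filter (fun w => T ⊆ w ∧ Disjoint w Fs)
      = U.powerset.image (fun s => T ∪ s) := by
    ext w
    simp only [Finset.mem_filter, Finset.mem_univ, true_and, Finset.mem_image,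
      Finset.mem_powerset]
    constructor
    · rintro ⟨hTw, hwF⟩
      refine ⟨w \ T, ?_, ?_⟩
      · intro i hi
        rw [Finset.mem_sdiff] at hi
        simp only [hU, Finset.mem_compl, Finset.mem_union]
        push_neg
        exact ⟨hi.2, Finset.disjoint_left.1 hwF hi.1⟩
      · rw [Finset.union_sdiff_of_subset hTw]
    · rintro ⟨s, hs, rfl⟩
      constructor
      · exact Finset.subset_union_left
      · refine Finset.disjoint_left.2 fun i hi hiF => ?_
        rcases Finset.mem_union.1 hi with h | h
        · exact Finset.disjoint_left.1 hd h hiF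
        · have := hs h; simp [hU, Finset.mem_compl] at this; exact this.2 hiF
  have hinj : ∀ s₁ ∈ U.powerset, ∀ s₂ ∈ U.powerset,
      T ∪ s₁ = T ∪ s₂ → s₁ = s₂ := by
    intro s₁ h₁ s₂ h₂ h
    rw [Finset.mem_powerset] at h₁ h₂
    have hd1 : ∀ s ⊆ U, Disjoint T s := by
      intro s hs
      refine Finset.disjoint_left.2 fun i hiT his => ?_
      have := hs his; simp [hU, Finset.mem_compl] at this; exact this.1 hiT
    have := congrArg (fun t => t \ T) h
    simpa [Finset.union_sdiff_cancel_left (hd1 s₁ h₁).symm.symm,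
      Finset.sdiff_eq_self_of_disjoint ((hd1 s₁ h₁).symm),
      Finset.union_sdiff_left,
      Finset.sdiff_eq_self_of_disjoint ((hd1 s₂ h₂).symm)] using this
  rw [himg, Finset.sum_image hinj, Finset.sum_congr rfl hsum, ← Finset.mul_sum]
  have : ∑ s ∈ U.powerset, (∏ i ∈ s, p i) * ∏ i ∈ U \ s, (1 - p i)
      = ∏ i ∈ U, (p i + (1 - p i)) := (Finset.prod_add p (fun i => 1 - p i) U).symm
  rw [this]
  simp

def Tset {F : Type*} [DecidableEq F] (κ : Finset (F × Bool)) : Finset F :=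
  (κ.filter (fun a => a.2)).image Prod.fst

def Fset {F : Type*} [DecidableEq F] (κ : Finset (F × Bool)) : Finset F :=
  (κ.filter (fun a => ¬ a.2)).image Prod.fst

lemma mem_Tset {κ : Finset (F × Bool)} {f : F} :
    f ∈ Tset κ ↔ (f, true) ∈ κ := by
  simp only [Tset, Finset.mem_image, Finset.mem_filter]
  constructor
  · rintro ⟨⟨a, b⟩, ⟨ha, hb⟩, rfl⟩
    cases b with
    | false => simp at hb
    | true => exact ha
  · intro h; exact ⟨(f, true), ⟨h, rfl⟩, rfl⟩

lemma mem_Fset {κ : Finset (F × Bool)} {f : F} :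
    f ∈ Fset κ ↔ (f, false) ∈ κ := by
  simp only [Fset, Finset.mem_image, Finset.mem_filter]
  constructor
  · rintro ⟨⟨a, b⟩, ⟨ha, hb⟩, rfl⟩
    cases b with
    | true => simp at hb
    | false => exact ha
  · intro h; exact ⟨(f, false), ⟨h, by simp⟩, rfl⟩

lemma disjoint_Tset_Fset {κ : Finset (F × Bool)} (h : Consistent κ) :
    Disjoint (Tset κ) (Fset κ) := by
  refine Finset.disjoint_left.2 fun f hT hF => ?_
  exact h f ⟨mem_Tset.1 hT, mem_Fset.1 hF⟩

lemma compat_iff {κ : Finset (F × Bool)} {w : Finset F} :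
    Compatible κ w ↔ Tset κ ⊆ w ∧ Disjoint w (Fset κ) := by
  constructor
  · intro h
    refine ⟨fun f hf => (h f).1 (mem_Tset.1 hf), ?_⟩
    exact Finset.disjoint_left.2 fun f hw hF => (h f).2 (mem_Fset.1 hF) hw
  · rintro ⟨h1, h2⟩ f
    exact ⟨fun hf => h1 (mem_Tset.2 hf),
      fun hf hw => Finset.disjoint_left.1 h2 hw (mem_Fset.2 hf)⟩

lemma rhoC_eq (p : F → ℝ) (κ : Finset (F × Bool)) :
    rhoC p κ = (∏ i ∈ Tset κ, p i) * ∏ i ∈ Fset κ, (1 - p i) := by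
  have hsplit : rhoC p κ =
      (∏ a ∈ κ.filter (fun a => a.2), (if a.2 then p a.1 else 1 - p a.1)) *
      ∏ a ∈ κ.filter (fun a => ¬ a.2), (if a.2 then p a.1 else 1 - p a.1) :=
    (Finset.prod_filter_mul_prod_filter_not κ _ _).symm
  rw [hsplit]
  congr 1
  · rw [Tset, Finset.prod_image]
    · exact Finset.prod_congr rfl fun a ha => by
        have := (Finset.mem_filter.1 ha).2; simp [this]
    · intro a ha b hb hab
      have h1 := (Finset.mem_filter.1 ha).2
      have h2 := (Finset.mem_filter.1 hb).2
      exact Prod.ext hab (by simp_all)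
  · rw [Fset, Finset.prod_image]
    · exact Finset.prod_congr rfl fun a ha => by
        have := (Finset.mem_filter.1 ha).2; simp [this]
    · intro a ha b hb hab
      have h1 := (Finset.mem_filter.1 ha).2
      have h2 := (Finset.mem_filter.1 hb).2
      exact Prod.ext hab (by simp_all)

theorem mu_c_eq_world_measure' (p : F → ℝ) (hp : ∀ f, 0 ≤ p f ∧ p f ≤ 1)
    (K : Finset (Finset (F × Bool)))
    (hc : ∀ κ ∈ K, Consistent κ)
    (hpi : ∀ κ₁ ∈ K, ∀ κ₂ ∈ K, κ₁ ≠ κ₂ → ¬ Consistent (κ₁ ∪ κ₂)) :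
    ∑ κ ∈ K, rhoC p κ =
      ∑ w ∈ (univ : Finset (Finset F)).filter (fun w => ∃ κ ∈ K, Compatible κ w),
        rhoWorld p w := by
  have hterm : ∀ κ ∈ K, rhoC p κ =
      ∑ w ∈ (univ : Finset (Finset F)).filter (fun w => Compatible κ w),
        rhoWorld p w := by
    intro κ hκ
    rw [rhoC_eq, ← sum_compat p (Tset κ) (Fset κ) (disjoint_Tset_Fset (hc κ hκ))]
    apply Finset.sum_congr _ (fun _ _ => rfl)
    apply Finset.filter_congr
    intro w _
    simpa using compat_iff.symm
  rw [Finset.sum_congr rfl hterm]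
  have hdisj : ∀ κ₁ ∈ K, ∀ κ₂ ∈ K, κ₁ ≠ κ₂ →
      Disjoint ((univ : Finset (Finset F)).filter (fun w => Compatible κ₁ w))
        ((univ : Finset (Finset F)).filter (fun w => Compatible κ₂ w)) := by
    intro κ₁ h₁ κ₂ h₂ hne
    refine Finset.disjoint_left.2 fun w hw1 hw2 => ?_
    have c1 := (Finset.mem_filter.1 hw1).2
    have c2 := (Finset.mem_filter.1 hw2).2
    refine hpi κ₁ h₁ κ₂ h₂ hne fun f ⟨ht, hf⟩ => ?_
    have hfw : f ∈ w := by
      rcases Finset.mem_union.1 ht with h | h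
      · exact (c1 f).1 h
      · exact (c2 f).1 h
    rcases Finset.mem_union.1 hf with h | h
    · exact (c1 f).2 h hfw
    · exact (c2 f).2 h hfw
  rw [← Finset.sum_biUnion hdisj]
  apply Finset.sum_congr _ (fun _ _ => rfl)
  ext w
  simp [Finset.mem_biUnion, Finset.mem_filter]

end Aux

open scoped Classical in
theorem mu_c_eq_world_measure {F : Type*} [Fintype F] [DecidableEq F]
    (p : F → ℝ) (hp : ∀ f, 0 ≤ p f ∧ p f ≤ 1)
    (K : Finset (Finset (F × Bool)))
    (hc : ∀ κ ∈ K, Consistent κ)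
    (hpi : ∀ κ₁ ∈ K, ∀ κ₂ ∈ K, κ₁ ≠ κ₂ → ¬ Consistent (κ₁ ∪ κ₂)) :
    ∑ κ ∈ K, rhoC p κ =
      ∑ w ∈ (univ : Finset (Finset F)).filter (fun w => ∃ κ ∈ K, Compatible κ w),
        rhoWorld p w := by
  exact mu_c_eq_world_measure' p hp K hc hpi
end
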